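/- arXiv:1802.03733 — 2 statements merged into one kernel-verified Lean document; each statement's English description precedes it below -/
import Mathlib

section
/- Let X be a Banach space, and for p = 1, 2, 3 let T_p : X^p → X be a bounded p-linear map. Suppose there exists η ∈ (0, 1/4) with ‖T_1‖ ≤ η, and let r > 0 satisfy r < min{1/(8‖T_2‖), 1/(4√‖T_3‖)}. Then for every y ∈ X with ‖y‖ < r/4 there exists a unique x ∈ X with ‖x‖ < r such that x = y + T_1(x) + T_2(x,x) + T_3(x,x,x). -/
/-!
On the closed ball of radius `r`, the map `F x = y + T1 x + T2 (x, x) + T3 (x, x, x)` lands in the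
open ball, since `‖y‖ + η r + ‖T2‖ r² + ‖T3‖ r³ < r/4 + r/4 + r/8 + r/16`, and it is Lipschitz with
constant `‖T1‖ + 2 ‖T2‖ r + 3 ‖T3‖ r² < 1/4 + 1/4 + 3/16`. The Banach fixed point theorem on the
closed ball then gives exactly one fixed point there, and it lies in the open ball.
-/

open Metric Set NNReal

namespace ContinuousMultilinearMap

variable {𝕜 E G : Type*} [NontriviallyNormedField 𝕜] [SeminormedAddCommGroup E] [NormedSpace 𝕜 E]
  [SeminormedAddCommGroup G] [NormedSpace 𝕜 G] {n : ℕ}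

theorem norm_apply_const_le_of_le (f : E [×n]→L[𝕜] G) {x : E} {r : ℝ} (hx : ‖x‖ ≤ r) :
    ‖f fun _ => x‖ ≤ ‖f‖ * r ^ n :=
  f.le_opNorm_mul_pow_of_le ((pi_norm_const_le x).trans hx)

theorem lipschitzOnWith_apply_const (f : E [×n]→L[𝕜] G) (r : ℝ≥0) :
    LipschitzOnWith (‖f‖₊ * n * r ^ (n - 1)) (fun x => f fun _ => x) (closedBall 0 r) := by
  refine LipschitzOnWith.of_dist_le_mul fun x hx x' hx' => ?_
  rw [mem_closedBall_zero_iff] at hx hx'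
  have hmax : max ‖fun _ : Fin n => x‖ ‖fun _ : Fin n => x'‖ ≤ r :=
    max_le ((pi_norm_const_le x).trans hx) ((pi_norm_const_le x').trans hx')
  have hsub : ‖(fun _ : Fin n => x) - fun _ => x'‖ ≤ ‖x - x'‖ := pi_norm_const_le (x - x')
  calc dist (f fun _ => x) (f fun _ => x')
      ≤ ‖f‖ * n * max ‖fun _ : Fin n => x‖ ‖fun _ : Fin n => x'‖ ^ (n - 1)
          * ‖(fun _ : Fin n => x) - fun _ => x'‖ := by
        simpa [dist_eq_norm] using f.norm_image_sub_le (fun _ => x) fun _ => x'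
    _ ≤ ‖f‖ * n * r ^ (n - 1) * ‖x - x'‖ := by gcongr
    _ = _ := by simp [dist_eq_norm]

end ContinuousMultilinearMap

theorem exists_unique_fixedPoint_of_mapsTo_ball {α : Type*} [MetricSpace α] [CompleteSpace α]
    {f : α → α} {K : ℝ≥0} {c : α} {r : ℝ} (hr : 0 ≤ r) (hK : K < 1)
    (hf : LipschitzOnWith K f (closedBall c r)) (hmaps : MapsTo f (closedBall c r) (ball c r)) :
    ∃! x, x ∈ ball c r ∧ x = f x := by
  have hself : MapsTo f (closedBall c r) (closedBall c r) := hmaps.mono_right ball_subset_closedBall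
  have hcontr : ContractingWith K (hself.restrict f _ _) := ⟨hK, hf.mapsToRestrict hself⟩
  obtain ⟨x, hx, hfix, -⟩ := hcontr.exists_fixedPoint' isClosed_closedBall.isComplete hself
    (mem_closedBall_self hr) (edist_ne_top _ _)
  refine ⟨x, ⟨hfix ▸ hmaps hx, hfix.symm⟩, fun x' ⟨hx', hfix'⟩ => ?_⟩
  have := hcontr.fixedPoint_unique' (x := ⟨x', ball_subset_closedBall hx'⟩) (y := ⟨x, hx⟩)
    (Subtype.ext hfix'.symm) (Subtype.ext hfix)
  exact congrArg Subtype.val this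

theorem cubic_fixed_point_general {X : Type*} [NormedAddCommGroup X] [NormedSpace ℝ X]
    [CompleteSpace X]
    (T1 : X [×1]→L[ℝ] X) (T2 : X [×2]→L[ℝ] X) (T3 : X [×3]→L[ℝ] X)
    (η : ℝ) (hη : η < 1/4) (hT1 : ‖T1‖ ≤ η)
    (r : ℝ) (hr0 : 0 < r) (hr2 : 8 * ‖T2‖ * r < 1) (hr3 : 16 * ‖T3‖ * r ^ 2 < 1)
    (y : X) (hy : ‖y‖ < r / 4) :
    ∃! x : X, ‖x‖ < r ∧ x = y + T1 ![x] + T2 ![x, x] + T3 ![x, x, x] := by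
  lift r to ℝ≥0 using hr0.le
  set F : X → X := fun x => y + ((T1 fun _ => x) + (T2 fun _ => x) + (T3 fun _ => x))
  have hF : ∀ x, y + T1 ![x] + T2 ![x, x] + T3 ![x, x, x] = F x := fun x => by
    simp only [F, Matrix.vec_single_eq_const, Matrix.vecCons_const, add_assoc]
  have hlip : LipschitzOnWith _ F (closedBall 0 r) :=
    (LipschitzWith.const y).lipschitzOnWith.add <|
      ((T1.lipschitzOnWith_apply_const r).add (T2.lipschitzOnWith_apply_const r)).add
        (T3.lipschitzOnWith_apply_const r)
  have hmaps : MapsTo F (closedBall 0 r) (ball 0 r) := fun x hx => by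
    rw [mem_closedBall_zero_iff] at hx
    rw [mem_ball_zero_iff]
    have h1 := T1.norm_apply_const_le_of_le hx
    have h2 := T2.norm_apply_const_le_of_le hx
    have h3 := T3.norm_apply_const_le_of_le hx
    calc ‖F x‖ ≤ ‖y‖ + (‖T1 fun _ => x‖ + ‖T2 fun _ => x‖ + ‖T3 fun _ => x‖) :=
          (norm_add_le _ _).trans (by gcongr; exact norm_add₃_le)
      _ < r := by nlinarith [norm_nonneg T1, norm_nonneg T2, norm_nonneg T3]
  simp only [hF, ← mem_ball_zero_iff]
  refine exists_unique_fixedPoint_of_mapsTo_ball r.2 ?_ hlip hmaps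
  rw [← NNReal.coe_lt_coe]
  push_cast
  norm_num
  linarith

/-- Cubic fixed point proposition in a Banach space.
`T1, T2, T3` are bounded 1-, 2-, 3-linear maps.
The conditions `8‖T2‖r < 1` and `16‖T3‖r² < 1` are the (equivalent, multiplied-out)
forms of `r < min{1/(8‖T2‖), 1/(4√‖T3‖)}` for `r > 0`. -/
theorem cubic_fixed_point {X : Type*} [NormedAddCommGroup X] [NormedSpace ℝ X]
    [CompleteSpace X]
    (T1 : X [×1]→L[ℝ] X) (T2 : X [×2]→L[ℝ] X) (T3 : X [×3]→L[ℝ] X)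
    (η : ℝ) (hη0 : 0 < η) (hη : η < 1/4) (hT1 : ‖T1‖ ≤ η)
    (r : ℝ) (hr0 : 0 < r) (hr2 : 8 * ‖T2‖ * r < 1) (hr3 : 16 * ‖T3‖ * r ^ 2 < 1)
    (y : X) (hy : ‖y‖ < r / 4) :
    ∃! x : X, ‖x‖ < r ∧ x = y + T1 ![x] + T2 ![x, x] + T3 ![x, x, x] :=
  cubic_fixed_point_general T1 T2 T3 η hη hT1 r hr0 hr2 hr3 y hy
end

section
/- Let 1 ≤ p ≤ p' and let (X_1, μ_1), (X_2, μ_2) be σ-finite measure spaces. If f : X_1 × X_2 → ℝ belongs to L^p(X_1; L^{p'}(X_2)), then f ∈ L^{p'}(X_2; L^p(X_1)) and ‖f‖_{L^{p'}(X_2; L^p(X_1))} ≤ ‖f‖_{L^p(X_1; L^{p'}(X_2))}. -/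
/-!
With `g = |f|^p` and `s = p'/p ≥ 1`, the claim is the `1/p`-th power of Minkowski's integral
inequality `‖∫ g(x, ·) dμ(x)‖_{L^s(ν)} ≤ ∫ ‖g(x, ·)‖_{L^s(ν)} dμ(x)` for `g ≥ 0`.
Writing `I = ∫ g(x, ·) dμ(x)` and `A = ‖I‖_s^s`, Tonelli and Hölder give
`A = ∫∫ I^{s-1} g ≤ A^{1-1/s} ∫ ‖g(x, ·)‖_s dμ(x)`, and one divides by `A^{1-1/s}` when `A < ∞`.
In general, `g` is cut down to height `n` on the `n`-th of the finite-measure rectangles given by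
σ-finiteness, which makes `A` finite, and monotone convergence passes to the limit.
-/

open MeasureTheory

/-- The mixed norm `‖f‖_{L^p(μ; L^q(ν))}` of `f : α → β → ℝ`:
`(∫_α (∫_β |f x y|^q dν)^{p/q} dμ)^{1/p}`. -/
noncomputable def mixedNorm {α β : Type*} [MeasurableSpace α] [MeasurableSpace β]
    (μ : Measure α) (ν : Measure β) (p q : ℝ) (f : α → β → ℝ) : ENNReal :=
  (∫⁻ x, (∫⁻ y, ENNReal.ofReal |f x y| ^ q ∂ν) ^ (p / q) ∂μ) ^ (1 / p)

open Function
open scoped ENNReal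

namespace ENNReal

theorem iSup_rpow_of_pos {ι : Sort*} (f : ι → ℝ≥0∞) {s : ℝ} (hs : 0 < s) :
    (⨆ i, f i) ^ s = ⨆ i, f i ^ s :=
  (orderIsoRpow s hs).map_iSup f

theorem rpow_le_of_le_rpow_one_sub_mul {A R : ℝ≥0∞} {t : ℝ} (ht : 0 < t) (hA : A ≠ ⊤)
    (h : A ≤ A ^ (1 - t) * R) : A ^ t ≤ R := by
  rcases eq_or_ne A 0 with rfl | hA₀
  · simp [zero_rpow_of_pos ht]
  have hsplit : A ^ (1 - t) * A ^ t = A := by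
    rw [← rpow_add _ _ hA₀ hA, sub_add_cancel, rpow_one]
  exact (ENNReal.mul_le_mul_iff_right (rpow_pos (pos_iff_ne_zero.2 hA₀) hA).ne'
      (rpow_ne_top_of_ne_zero hA₀ hA)).mp
    (hsplit.trans_le h)

end ENNReal

namespace MeasureTheory

variable {α β : Type*} [MeasurableSpace α] [MeasurableSpace β]

theorem lintegral_rpow_sub_one_mul_le (ν : Measure β) {s : ℝ} (hs : 1 < s)
    {F G : β → ℝ≥0∞} (hF : AEMeasurable F ν) (hG : AEMeasurable G ν) :
    ∫⁻ y, F y ^ (s - 1) * G y ∂ν ≤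
      (∫⁻ y, F y ^ s ∂ν) ^ (1 - 1 / s) * (∫⁻ y, G y ^ s ∂ν) ^ (1 / s) := by
  have hs₁ : s - 1 ≠ 0 := by linarith
  have hF_pow : ∀ y, (F y ^ (s - 1)) ^ (s / (s - 1)) = F y ^ s := fun y => by
    rw [← ENNReal.rpow_mul, mul_div_cancel₀ _ hs₁]
  have hexp : 1 / (s / (s - 1)) = 1 - 1 / s := by field_simp
  simpa only [Pi.mul_apply, Real.conjExponent, hF_pow, hexp] using
    ENNReal.lintegral_mul_le_Lp_mul_Lq ν (Real.HolderConjugate.conjExponent hs).symm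
      (hF.pow_const (s - 1)) hG

theorem lintegral_rpow_lintegral_le_of_ne_top (μ : Measure α) (ν : Measure β) [SFinite μ]
    [SFinite ν] {s : ℝ} (hs : 1 < s) {g : α → β → ℝ≥0∞} (hg : Measurable (uncurry g))
    (hA : ∫⁻ y, (∫⁻ x, g x y ∂μ) ^ s ∂ν ≠ ⊤) :
    (∫⁻ y, (∫⁻ x, g x y ∂μ) ^ s ∂ν) ^ (1 / s) ≤ ∫⁻ x, (∫⁻ y, g x y ^ s ∂ν) ^ (1 / s) ∂μ := by
  refine ENNReal.rpow_le_of_le_rpow_one_sub_mul (by positivity) hA ?_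
  set I : β → ℝ≥0∞ := fun y => ∫⁻ x, g x y ∂μ
  have hI : Measurable I := hg.lintegral_prod_left'
  have hI_pow : ∀ y, I y ^ s = I y ^ (s - 1) * I y := fun y => by
    simpa using ENNReal.rpow_add_of_nonneg (x := I y) (s - 1) 1 (by linarith) zero_le_one
  calc ∫⁻ y, I y ^ s ∂ν
      = ∫⁻ y, ∫⁻ x, I y ^ (s - 1) * g x y ∂μ ∂ν := lintegral_congr fun y =>
        (hI_pow y).trans (lintegral_const_mul _ (hg.comp measurable_prodMk_right)).symm
    _ = ∫⁻ x, ∫⁻ y, I y ^ (s - 1) * g x y ∂ν ∂μ :=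
        (lintegral_lintegral_swap
          (((hI.comp measurable_snd).pow_const _).mul hg).aemeasurable).symm
    _ ≤ ∫⁻ x, (∫⁻ y, I y ^ s ∂ν) ^ (1 - 1 / s) * (∫⁻ y, g x y ^ s ∂ν) ^ (1 / s) ∂μ :=
        lintegral_mono fun x => lintegral_rpow_sub_one_mul_le ν hs hI.aemeasurable
          (hg.comp measurable_prodMk_left).aemeasurable
    _ = (∫⁻ y, I y ^ s ∂ν) ^ (1 - 1 / s) * ∫⁻ x, (∫⁻ y, g x y ^ s ∂ν) ^ (1 / s) ∂μ :=
        lintegral_const_mul _ (((hg.pow_const s).lintegral_prod_right').pow_const _)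

theorem lintegral_rpow_lintegral_iSup (μ : Measure α) (ν : Measure β) [SFinite μ] {s : ℝ}
    (hs : 0 < s) {T : ℕ → α → β → ℝ≥0∞} (hT : ∀ n, Measurable (uncurry (T n)))
    (hT_mono : Monotone T) :
    ∫⁻ y, (∫⁻ x, ⨆ n, T n x y ∂μ) ^ s ∂ν = ⨆ n, ∫⁻ y, (∫⁻ x, T n x y ∂μ) ^ s ∂ν := by
  have hI_mono : Monotone fun n y => ∫⁻ x, T n x y ∂μ :=
    fun n m h y => lintegral_mono fun x => hT_mono h x y
  calc ∫⁻ y, (∫⁻ x, ⨆ n, T n x y ∂μ) ^ s ∂ν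
      = ∫⁻ y, ⨆ n, (∫⁻ x, T n x y ∂μ) ^ s ∂ν := lintegral_congr fun y => by
        rw [lintegral_iSup (f := fun n x => T n x y) (fun n => (hT n).comp measurable_prodMk_right)
          (fun n m h x => hT_mono h x y), ENNReal.iSup_rpow_of_pos _ hs]
    _ = ⨆ n, ∫⁻ y, (∫⁻ x, T n x y ∂μ) ^ s ∂ν :=
        lintegral_iSup (fun n => (hT n).lintegral_prod_left'.pow_const s)
          (fun n m h y => ENNReal.rpow_le_rpow (hI_mono h y) hs.le)

section Truncation

variable (μ : Measure α) (ν : Measure β) [SigmaFinite μ] [SigmaFinite ν] (g : α → β → ℝ≥0∞)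

noncomputable def spanningTruncation (n : ℕ) (x : α) (y : β) : ℝ≥0∞ :=
  (spanningSets μ n ×ˢ spanningSets ν n).indicator (fun z => min (uncurry g z) n) (x, y)

variable {g} in
theorem measurable_spanningTruncation (hg : Measurable (uncurry g)) (n : ℕ) :
    Measurable (uncurry (spanningTruncation μ ν g n)) :=
  (hg.min measurable_const).indicator
    ((measurableSet_spanningSets μ n).prod (measurableSet_spanningSets ν n))

theorem monotone_spanningTruncation : Monotone (spanningTruncation μ ν g) := fun _ _ h _ _ =>
  (Set.indicator_le_indicator_of_subset
      (Set.prod_mono (monotone_spanningSets μ h) (monotone_spanningSets ν h))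
      (fun _ => zero_le) _).trans
    (Set.indicator_le_indicator (min_le_min_left _ (Nat.cast_le.2 h)))

theorem spanningTruncation_le (n : ℕ) (x : α) (y : β) : spanningTruncation μ ν g n x y ≤ g x y :=
  (Set.indicator_le_self _ _ _).trans (min_le_left _ _)

theorem iSup_spanningTruncation (x : α) (y : β) : ⨆ n, spanningTruncation μ ν g n x y = g x y := by
  refine le_antisymm (iSup_le fun n => spanningTruncation_le μ ν g n x y) ?_
  set N := max (spanningSetsIndex μ x) (spanningSetsIndex ν y)
  have h_eq : ∀ k, spanningTruncation μ ν g (max k N) x y = min (g x y) (max k N : ℕ) := fun k =>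
    Set.indicator_of_mem (Set.mk_mem_prod
      (mem_spanningSets_of_index_le μ x ((le_max_left _ _).trans (le_max_right _ _)))
      (mem_spanningSets_of_index_le ν y ((le_max_right _ _).trans (le_max_right _ _)))) _
  calc g x y = ⨆ k : ℕ, min (g x y) k := by
        rw [← inf_iSup_eq, ENNReal.iSup_natCast, inf_top_eq]
    _ ≤ ⨆ n, spanningTruncation μ ν g n x y := iSup_le fun k => le_iSup_of_le (max k N) <| by
        rw [h_eq]
        exact min_le_min_left _ (Nat.cast_le.2 (le_max_left _ _))

theorem lintegral_spanningTruncation_le (n : ℕ) (y : β) :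
    ∫⁻ x, spanningTruncation μ ν g n x y ∂μ ≤
      (spanningSets ν n).indicator (fun _ => n * μ (spanningSets μ n)) y := by
  by_cases hy : y ∈ spanningSets ν n
  · rw [Set.indicator_of_mem hy, ← lintegral_indicator_const (measurableSet_spanningSets μ n)]
    refine lintegral_mono fun x => ?_
    by_cases hx : x ∈ spanningSets μ n
    · simp [spanningTruncation, hx, hy]
    · simp [spanningTruncation, hx]
  · simp [spanningTruncation, hy]

theorem lintegral_rpow_lintegral_spanningTruncation_ne_top {s : ℝ} (hs : 0 < s) (n : ℕ) :
    ∫⁻ y, (∫⁻ x, spanningTruncation μ ν g n x y ∂μ) ^ s ∂ν ≠ ⊤ := by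
  set C : ℝ≥0∞ := n * μ (spanningSets μ n)
  have hC : C ≠ ⊤ := ENNReal.mul_ne_top (ENNReal.natCast_ne_top n)
    (measure_spanningSets_lt_top μ n).ne
  refine (lt_of_le_of_lt ?_ (ENNReal.mul_lt_top (ENNReal.rpow_lt_top_of_nonneg hs.le hC)
    (measure_spanningSets_lt_top ν n))).ne
  calc ∫⁻ y, (∫⁻ x, spanningTruncation μ ν g n x y ∂μ) ^ s ∂ν
      ≤ ∫⁻ y, (spanningSets ν n).indicator (fun _ => C) y ^ s ∂ν :=
        lintegral_mono fun y =>
          ENNReal.rpow_le_rpow (lintegral_spanningTruncation_le μ ν g n y) hs.le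
    _ = ∫⁻ y, (spanningSets ν n).indicator (fun _ => C ^ s) y ∂ν := lintegral_congr fun y => by
        by_cases hy : y ∈ spanningSets ν n <;> simp [hy, ENNReal.zero_rpow_of_pos hs]
    _ = C ^ s * ν (spanningSets ν n) := lintegral_indicator_const (measurableSet_spanningSets ν n) _

end Truncation

theorem lintegral_rpow_lintegral_le (μ : Measure α) (ν : Measure β) [SigmaFinite μ]
    [SigmaFinite ν] {s : ℝ} (hs : 1 ≤ s) {g : α → β → ℝ≥0∞} (hg : Measurable (uncurry g)) :
    (∫⁻ y, (∫⁻ x, g x y ∂μ) ^ s ∂ν) ^ (1 / s) ≤ ∫⁻ x, (∫⁻ y, g x y ^ s ∂ν) ^ (1 / s) ∂μ := by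
  rcases hs.eq_or_lt with rfl | hs
  · simpa using (lintegral_lintegral_swap hg.aemeasurable).ge
  have hs₀ : 0 < s := one_pos.trans hs
  have hT := measurable_spanningTruncation μ ν hg
  calc (∫⁻ y, (∫⁻ x, g x y ∂μ) ^ s ∂ν) ^ (1 / s)
      = (⨆ n, ∫⁻ y, (∫⁻ x, spanningTruncation μ ν g n x y ∂μ) ^ s ∂ν) ^ (1 / s) := by
        simp_rw [← lintegral_rpow_lintegral_iSup μ ν hs₀ hT (monotone_spanningTruncation μ ν g),
          iSup_spanningTruncation]
    _ = ⨆ n, (∫⁻ y, (∫⁻ x, spanningTruncation μ ν g n x y ∂μ) ^ s ∂ν) ^ (1 / s) :=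
        ENNReal.iSup_rpow_of_pos _ (by positivity)
    _ ≤ ∫⁻ x, (∫⁻ y, g x y ^ s ∂ν) ^ (1 / s) ∂μ := iSup_le fun n =>
        (lintegral_rpow_lintegral_le_of_ne_top μ ν hs (hT n)
          (lintegral_rpow_lintegral_spanningTruncation_ne_top μ ν g hs₀ n)).trans <|
        lintegral_mono fun x => ENNReal.rpow_le_rpow
          (lintegral_mono fun y => ENNReal.rpow_le_rpow (spanningTruncation_le μ ν g n x y) hs₀.le)
          (by positivity)

end MeasureTheory

/-- Minkowski's integral inequality for mixed norms: if `1 ≤ p ≤ p'`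
and `f ∈ L^p(X₁; L^{p'}(X₂))`, then `f ∈ L^{p'}(X₂; L^p(X₁))` with
`‖f‖_{L^{p'}(X₂; L^p(X₁))} ≤ ‖f‖_{L^p(X₁; L^{p'}(X₂))}`. -/
theorem minkowski_mixed_norm {α β : Type*} [MeasurableSpace α] [MeasurableSpace β]
    (μ : Measure α) (ν : Measure β) [SigmaFinite μ] [SigmaFinite ν]
    (p p' : ℝ) (hp : 1 ≤ p) (hpp' : p ≤ p')
    (f : α → β → ℝ) (hf : Measurable (Function.uncurry f))
    (hmem : mixedNorm μ ν p p' f < ⊤) :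
    mixedNorm ν μ p' p (fun y x => f x y) < ⊤ ∧
      mixedNorm ν μ p' p (fun y x => f x y) ≤ mixedNorm μ ν p p' f := by
  have hp₀ : 0 < p := one_pos.trans_le hp
  have hp'₀ : 0 < p' := hp₀.trans_le hpp'
  set g : α → β → ℝ≥0∞ := fun x y => ENNReal.ofReal |f x y| ^ p
  have hg_pow : ∀ x y, g x y ^ (p' / p) = ENNReal.ofReal |f x y| ^ p' := fun x y => by
    rw [← ENNReal.rpow_mul, mul_div_cancel₀ _ hp₀.ne']
  have hle : mixedNorm ν μ p' p (fun y x => f x y) ≤ mixedNorm μ ν p p' f := calc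
    mixedNorm ν μ p' p (fun y x => f x y)
        = ((∫⁻ y, (∫⁻ x, g x y ∂μ) ^ (p' / p) ∂ν) ^ (1 / (p' / p))) ^ (1 / p) := by
      rw [mixedNorm, ← ENNReal.rpow_mul]
      congr 1
      field_simp
    _ ≤ (∫⁻ x, (∫⁻ y, g x y ^ (p' / p) ∂ν) ^ (1 / (p' / p)) ∂μ) ^ (1 / p) :=
      ENNReal.rpow_le_rpow (lintegral_rpow_lintegral_le μ ν ((one_le_div hp₀).2 hpp')
        (hf.abs.ennreal_ofReal.pow_const p)) (by positivity)
    _ = mixedNorm μ ν p p' f := by simp only [hg_pow, one_div_div]; rfl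
  exact ⟨hle.trans_lt hmem, hle⟩
end
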